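/- Let μ*, ν be Borel probability measures on ℝ^d, λ ∈ (0,1), and μ = (1−λ)μ* + λν. Let 𝒮 be a class of nonempty compact subsets of ℝ^d such that all pushforwards μ_S and μ*_S for S ∈ 𝒮 are non-atomic with finite first moments. Suppose there exist S₀ ∈ 𝒮, δ > 0, β ∈ (0, 1−λ) and r* > 0 such that every S ∈ 𝒮 with Φ(μ*_S) > Φ(μ*_{S₀}) + δ satisfies F_{μ_S}(r) < β F_{μ*_{S₀}}(r) for all r ≤ r* (Assumption A). Let W : [0,1] → [0,∞) be nonincreasing with W(t) = 0 for all t ≥ ζ := F_{μ_{S₀}}(r*). Then every S ∈ 𝒮 satisfying Φ_W(μ_S) − Φ_W(μ_{S₀}) < (1 − β/(1−λ)) · IF_max(μ_{S₀}, W) satisfies Φ(μ*_S) ≤ Φ(μ*_{S₀}) + δ. In particular, if IF_max(μ_{S₀}, W) > 0, then any minimizer S† of S ↦ Φ_W(μ_S) over 𝒮 satisfies Φ(μ*_{S†}) ≤ Φ(μ*_{S₀}) + δ. -/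

import Mathlib

open MeasureTheory Set

/-- The cumulative distribution function `F_ρ(r) = ρ([0,r])`. -/
noncomputable def cdf (ρ : Measure ℝ) (r : ℝ) : ℝ := (ρ (Iic r)).toReal

/-- The quantile function `F_ρ⁻¹(ζ) = inf { r ≥ 0 : F_ρ(r) ≥ ζ }`. -/
noncomputable def quant (ρ : Measure ℝ) (ζ : ℝ) : ℝ := sInf {r : ℝ | 0 ≤ r ∧ ζ ≤ cdf ρ r}

/-- The mean functional `Φ(ρ) = ∫ r dρ(r)`. -/
noncomputable def Phi (ρ : Measure ℝ) : ℝ := ∫ r, r ∂ρ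

/-- The robust functional `Φ_W(ρ) = ∫ r W(F_ρ(r)) dρ(r)`. -/
noncomputable def PhiW (W : ℝ → ℝ) (ρ : Measure ℝ) : ℝ := ∫ r, r * W (cdf ρ r) ∂ρ

/-- `IF_max(ρ,W) = ∫_0^{F_ρ⁻¹(ζ)} W(F_ρ(r)) F_ρ(r) dr` for `W` vanishing on `[ζ,1]`. -/
noncomputable def IFmax (W : ℝ → ℝ) (ρ : Measure ℝ) (ζ : ℝ) : ℝ :=
  ∫ r in (0 : ℝ)..(quant ρ ζ), W (cdf ρ r) * cdf ρ r

/-- The distortion function `d_S(x) = min_{y ∈ S} ‖x - y‖²`. -/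
noncomputable def distS {d : ℕ} (S : Set (EuclideanSpace ℝ (Fin d)))
    (x : EuclideanSpace ℝ (Fin d)) : ℝ := (Metric.infDist x S) ^ 2

/-- The pushforward `μ_S` of `μ` under `d_S`. -/
noncomputable def pushS {d : ℕ} (μ : Measure (EuclideanSpace ℝ (Fin d)))
    (S : Set (EuclideanSpace ℝ (Fin d))) : Measure ℝ := Measure.map (distS S) μ

/-!
Write `Ψ(u) = ∫_u^1 W`. For an atomless law `ρ` on `[0,∞)`, the layer cake formula applied to
`ρ` weighted by `W ∘ F_ρ`, together with the probability integral transform `F_ρ # ρ = U(0,1]`,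
gives `Φ_W(ρ) = ∫_0^∞ Ψ(F_ρ(s)) ds`.

If `S` is bad for `μ*`, Assumption A and `(1-λ) F_{μ*_{S₀}} ≤ F_{μ_{S₀}}` give
`F_{μ_S} ≤ c F_{μ_{S₀}}` on `(0, r*]` with `c = β/(1-λ)`. As `Ψ` and `W` are nonincreasing,
`Ψ(F_{μ_S}) - Ψ(F_{μ_{S₀}}) ≥ Ψ(c v) - Ψ(v) ≥ (1-c) v W(v)` for `v = F_{μ_{S₀}}` there, while
beyond `r*` the term `Ψ(F_{μ_{S₀}})` vanishes. Integrating,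
`Φ_W(μ_S) - Φ_W(μ_{S₀}) ≥ (1-c) IF_max(μ_{S₀}, W)`, incompatible with the assumed bound on
`Φ_W(μ_S) - Φ_W(μ_{S₀})` and, when `IF_max > 0`, with `S` minimizing `Φ_W(μ_·)`.
-/

open Filter Topology

section Cdf

variable {ρ : Measure ℝ}

lemma cdf_nonneg (r : ℝ) : 0 ≤ cdf ρ r := ENNReal.toReal_nonneg

variable [IsProbabilityMeasure ρ]

lemma cdf_eq_probabilityTheory_cdf : cdf ρ = ProbabilityTheory.cdf ρ :=
  funext fun x => (ProbabilityTheory.cdf_eq_real ρ x).symm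

lemma monotone_cdf : Monotone (cdf ρ) := by
  rw [cdf_eq_probabilityTheory_cdf]; exact ProbabilityTheory.monotone_cdf ρ

lemma measurable_cdf : Measurable (cdf ρ) := monotone_cdf.measurable

lemma cdf_le_one (r : ℝ) : cdf ρ r ≤ 1 := by
  rw [cdf_eq_probabilityTheory_cdf]; exact ProbabilityTheory.cdf_le_one ρ r

lemma ofReal_cdf (r : ℝ) : ENNReal.ofReal (cdf ρ r) = ρ (Iic r) := by
  rw [cdf_eq_probabilityTheory_cdf]; exact ProbabilityTheory.ofReal_cdf ρ r

lemma tendsto_cdf_atBot : Tendsto (cdf ρ) atBot (𝓝 0) := by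
  rw [cdf_eq_probabilityTheory_cdf]; exact ProbabilityTheory.tendsto_cdf_atBot ρ

lemma tendsto_cdf_atTop : Tendsto (cdf ρ) atTop (𝓝 1) := by
  rw [cdf_eq_probabilityTheory_cdf]; exact ProbabilityTheory.tendsto_cdf_atTop ρ

variable [NullSingletonClass ρ]

lemma continuous_cdf : Continuous (cdf ρ) := by
  rw [cdf_eq_probabilityTheory_cdf, continuous_iff_continuousAt]
  intro x
  set F := ProbabilityTheory.cdf ρ
  have hleft : Function.leftLim F x = F x := by
    have h := F.measure_singleton x
    rw [ProbabilityTheory.measure_cdf, measure_singleton, eq_comm, ENNReal.ofReal_eq_zero,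
      sub_nonpos] at h
    exact le_antisymm (F.mono.leftLim_le le_rfl) h
  exact continuousAt_iff_continuous_left_right.2
    ⟨continuousWithinAt_Iio_iff_Iic.1 (F.mono.continuousWithinAt_Iio_iff_leftLim_eq.2 hleft),
      F.right_continuous x⟩

/-- For `u ∈ [0,1)` the sublevel set `{F ≤ u}` is a half-line `Iic a` with `F a = u`. -/
lemma measure_cdf_preimage_Iic_of_mem_Ico {u : ℝ} (hu : u ∈ Ico 0 1) :
    ρ (cdf ρ ⁻¹' Iic u) = ENNReal.ofReal u := by
  set A := cdf ρ ⁻¹' Iic u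
  rcases A.eq_empty_or_nonempty with hA | hA
  · have hlt : ∀ r, u < cdf ρ r := fun r => by
      simpa [A] using (Set.eq_empty_iff_forall_notMem.1 hA r)
    have hu0 : u = 0 :=
      le_antisymm (ge_of_tendsto' tendsto_cdf_atBot fun r => (hlt r).le) hu.1
    rw [hA, measure_empty, hu0, ENNReal.ofReal_zero]
  obtain ⟨b, hb⟩ := eventually_atTop.1 ((tendsto_cdf_atTop (ρ := ρ)).eventually (lt_mem_nhds hu.2))
  have hAb : BddAbove A := ⟨b, fun r hr => not_lt.1 fun hbr => (hb r hbr.le).not_ge hr⟩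
  set a := sSup A
  have haA : a ∈ A := (isClosed_Iic.preimage continuous_cdf).csSup_mem hA hAb
  have hA_eq : A = Iic a := Subset.antisymm (fun r hr => le_csSup hAb hr)
    fun r hr => (monotone_cdf hr).trans haA
  have hFa : cdf ρ a = u := by
    have hright : ∀ᶠ r in 𝓝[>] a, u ≤ cdf ρ r := eventually_nhdsWithin_of_forall
      fun r (hr : a < r) => (not_le.1 fun h => (le_csSup hAb h).not_gt hr).le
    exact le_antisymm haA
      (ge_of_tendsto (continuous_cdf.tendsto a |>.mono_left nhdsWithin_le_nhds) hright)
  rw [hA_eq, ← ofReal_cdf, hFa]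


lemma measure_cdf_preimage_Iic (u : ℝ) : ρ (cdf ρ ⁻¹' Iic u) = ENNReal.ofReal (min u 1) := by
  rcases lt_or_ge u 0 with hu0 | hu0
  · have hA : cdf ρ ⁻¹' Iic u = ∅ :=
      eq_empty_of_forall_notMem fun r hr => (hu0.trans_le (cdf_nonneg r)).not_ge hr
    rw [hA, measure_empty, ENNReal.ofReal_of_nonpos (min_le_of_left_le hu0.le)]
  rcases lt_or_ge u 1 with hu1 | hu1
  · rw [min_eq_left hu1.le, measure_cdf_preimage_Iic_of_mem_Ico ⟨hu0, hu1⟩]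
  · have hA : cdf ρ ⁻¹' Iic u = univ :=
      eq_univ_of_forall fun r => (cdf_le_one r).trans hu1
    rw [hA, measure_univ, min_eq_right hu1, ENNReal.ofReal_one]

theorem map_cdf : ρ.map (cdf ρ) = volume.restrict (Ioc 0 1) := by
  refine Measure.ext_of_Iic _ _ fun u => ?_
  have hIoc : Iic u ∩ Ioc 0 1 = Ioc 0 (min u 1) := by
    ext t; simp only [mem_inter_iff, mem_Iic, mem_Ioc, le_min_iff]; tauto
  rw [Measure.map_apply measurable_cdf measurableSet_Iic, measure_cdf_preimage_Iic,
    Measure.restrict_apply measurableSet_Iic, hIoc, Real.volume_Ioc, sub_zero]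

lemma Ioi_ae_eq_cdf_preimage_Ioi (s : ℝ) : Ioi s =ᵐ[ρ] cdf ρ ⁻¹' Ioi (cdf ρ s) := by
  have hIic : Iic s =ᵐ[ρ] cdf ρ ⁻¹' Iic (cdf ρ s) := by
    refine ae_eq_of_subset_of_measure_ge (fun r hr => monotone_cdf hr) ?_
      measurableSet_Iic.nullMeasurableSet (measure_ne_top _ _)
    rw [measure_cdf_preimage_Iic, min_eq_left (cdf_le_one s), ofReal_cdf]
  simpa only [← preimage_compl, compl_Iic] using hIic.compl

lemma setIntegral_Ioi_comp_cdf {g : ℝ → ℝ} (hg : Measurable g) (s : ℝ) :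
    ∫ r in Ioi s, g (cdf ρ r) ∂ρ = ∫ t in Ioc (cdf ρ s) 1, g t := by
  rw [setIntegral_congr_set (Ioi_ae_eq_cdf_preimage_Ioi s),
    ← setIntegral_map measurableSet_Ioi hg.aestronglyMeasurable measurable_cdf.aemeasurable,
    map_cdf, Measure.restrict_restrict measurableSet_Ioi, inter_comm, Ioc_inter_Ioi,
    max_eq_right (cdf_nonneg s)]

end Cdf

section LayerCake

lemma MeasureTheory.Integrable.integrableOn_measureReal_lt {α : Type*} [MeasurableSpace α] {μ : Measure α}
    {f : α → ℝ} (hf : Integrable f μ) (hf_nn : 0 ≤ᵐ[μ] f) :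
    IntegrableOn (fun t => μ.real {a | t < f a}) (Ioi 0) := by
  have hmeas : Measurable fun t : ℝ => μ {a | t < f a} :=
    Antitone.measurable fun _ _ hst => measure_mono fun _ h => hst.trans_lt h
  refine integrable_toReal_of_lintegral_ne_top hmeas.aemeasurable ?_
  rw [← lintegral_eq_lintegral_meas_lt μ hf_nn hf.aemeasurable]
  exact hf.lintegral_lt_top.ne

variable {ρ : Measure ℝ} {w : ℝ → ℝ}

lemma measureReal_withDensity_Ioi (hw : Measurable w) (hw_nn : ∀ r, 0 ≤ w r) (t : ℝ) :
    (ρ.withDensity fun r => ENNReal.ofReal (w r)).real (Ioi t) = ∫ r in Ioi t, w r ∂ρ := by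
  rw [measureReal_def, withDensity_apply _ measurableSet_Ioi,
    integral_eq_lintegral_of_nonneg_ae (.of_forall hw_nn) hw.aestronglyMeasurable]

theorem integral_mul_eq_integral_setIntegral_Ioi (hρ_nn : ∀ᵐ r ∂ρ, 0 ≤ r)
    (hρ_int : Integrable (fun r => r) ρ) (hw : Measurable w) (hw_nn : ∀ r, 0 ≤ w r) {C : ℝ}
    (hw_le : ∀ r, w r ≤ C) :
    IntegrableOn (fun t => ∫ r in Ioi t, w r ∂ρ) (Ioi 0) ∧
      ∫ r, r * w r ∂ρ = ∫ t in Ioi 0, ∫ r in Ioi t, w r ∂ρ := by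
  set ρ' := ρ.withDensity fun r => ENNReal.ofReal (w r)
  have hdens : Measurable fun r => ENNReal.ofReal (w r) := hw.ennreal_ofReal
  have hfin : ∀ᵐ r ∂ρ, ENNReal.ofReal (w r) < ⊤ := .of_forall fun _ => ENNReal.ofReal_lt_top
  have hsmul : (fun r => (ENNReal.ofReal (w r)).toReal • r) = fun r => w r * r := by
    ext r; rw [ENNReal.toReal_ofReal (hw_nn r), smul_eq_mul]
  have hint' : Integrable (fun r => r) ρ' := by
    rw [integrable_withDensity_iff_integrable_smul' hdens hfin, hsmul]
    refine hρ_int.bdd_mul (c := C) hw.aestronglyMeasurable (.of_forall fun r => ?_)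
    rw [Real.norm_of_nonneg (hw_nn r)]
    exact hw_le r
  have hnn' : 0 ≤ᵐ[ρ'] fun r => r := withDensity_absolutelyContinuous _ _ hρ_nn
  have htail : (fun t => ρ'.real {a | t < a}) = fun t => ∫ r in Ioi t, w r ∂ρ :=
    funext (measureReal_withDensity_Ioi hw hw_nn)
  refine ⟨htail ▸ hint'.integrableOn_measureReal_lt hnn', ?_⟩
  rw [← htail, ← hint'.integral_eq_integral_meas_lt hnn',
    integral_withDensity_eq_integral_toReal_smul hdens hfin, hsmul]
  simp_rw [mul_comm]

end LayerCake

section Weight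

variable (W : ℝ → ℝ)

/-- `W` is only controlled on `[0,1]`; extending it by constants makes it antitone (hence
measurable) on `ℝ` without changing `W ∘ F_ρ`. -/
noncomputable def clampedWeight (t : ℝ) : ℝ := W (projIcc 0 1 zero_le_one t)

noncomputable def weightTail (u : ℝ) : ℝ := ∫ t in Ioc u 1, clampedWeight W t

variable {W}

lemma clampedWeight_of_mem {t : ℝ} (ht : t ∈ Icc (0 : ℝ) 1) : clampedWeight W t = W t := by
  rw [clampedWeight, projIcc_of_mem _ ht]

lemma clampedWeight_cdf {ρ : Measure ℝ} [IsProbabilityMeasure ρ] (r : ℝ) :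
    clampedWeight W (cdf ρ r) = W (cdf ρ r) :=
  clampedWeight_of_mem ⟨cdf_nonneg r, cdf_le_one r⟩

lemma clampedWeight_nonneg (hW_nn : ∀ t ∈ Icc (0 : ℝ) 1, 0 ≤ W t) (t : ℝ) :
    0 ≤ clampedWeight W t :=
  hW_nn _ (projIcc 0 1 zero_le_one t).2

lemma weightTail_nonneg (hW_nn : ∀ t ∈ Icc (0 : ℝ) 1, 0 ≤ W t) (u : ℝ) : 0 ≤ weightTail W u :=
  setIntegral_nonneg measurableSet_Ioc fun t _ => clampedWeight_nonneg hW_nn t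

lemma weightTail_eq_zero {u : ℝ} (hu : 0 ≤ u) (hW_zero : ∀ t, u ≤ t → W t = 0) :
    weightTail W u = 0 := by
  rw [weightTail, setIntegral_congr_fun measurableSet_Ioc fun t ht => by
    rw [clampedWeight_of_mem ⟨hu.trans ht.1.le, ht.2⟩, hW_zero t ht.1.le], integral_zero]

variable (hW_anti : AntitoneOn W (Icc 0 1))
include hW_anti

lemma antitone_clampedWeight : Antitone (clampedWeight W) := fun _ _ hst =>
  hW_anti (projIcc 0 1 zero_le_one _).2 (projIcc 0 1 zero_le_one _).2 (monotone_projIcc _ hst)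

lemma integrableOn_clampedWeight (a b : ℝ) : IntegrableOn (clampedWeight W) (Ioc a b) :=
  ((antitone_clampedWeight hW_anti).antitoneOn _).integrableOn_isCompact isCompact_Icc
    |>.mono_set Ioc_subset_Icc_self

lemma sub_mul_clampedWeight_le_weightTail_sub {a v : ℝ} (hav : a ≤ v) (hv : v ≤ 1) :
    (v - a) * clampedWeight W v ≤ weightTail W a - weightTail W v := by
  have hsplit : weightTail W a = (∫ t in Ioc a v, clampedWeight W t) + weightTail W v := by
    rw [weightTail, weightTail, ← setIntegral_union (Ioc_disjoint_Ioc_of_le le_rfl)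
      measurableSet_Ioc (integrableOn_clampedWeight hW_anti _ _)
      (integrableOn_clampedWeight hW_anti _ _), Ioc_union_Ioc_eq_Ioc hav hv]
  have hconst : ∫ _ in Ioc a v, clampedWeight W v = (v - a) * clampedWeight W v := by
    rw [setIntegral_const, Real.volume_real_Ioc_of_le hav, smul_eq_mul]
  rw [hsplit, add_sub_cancel_right, ← hconst]
  exact setIntegral_mono_on (integrableOn_const (by simp))
    (integrableOn_clampedWeight hW_anti _ _) measurableSet_Ioc
    fun t ht => antitone_clampedWeight hW_anti ht.2

variable (hW_nn : ∀ t ∈ Icc (0 : ℝ) 1, 0 ≤ W t)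
include hW_nn

lemma antitone_weightTail : Antitone (weightTail W) := fun _ _ hab =>
  setIntegral_mono_set (integrableOn_clampedWeight hW_anti _ 1)
    (.of_forall (clampedWeight_nonneg hW_nn)) (Ioc_subset_Ioc_left hab).eventuallyLE

end Weight

section RobustFunctional

variable {W : ℝ → ℝ} (hW_anti : AntitoneOn W (Icc 0 1)) (hW_nn : ∀ t ∈ Icc (0 : ℝ) 1, 0 ≤ W t)
include hW_anti hW_nn

theorem PhiW_eq_integral_weightTail {ρ : Measure ℝ} [IsProbabilityMeasure ρ]
    [NullSingletonClass ρ] (hρ_nn : ∀ᵐ r ∂ρ, 0 ≤ r) (hρ_int : Integrable (fun r => r) ρ) :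
    IntegrableOn (fun s => weightTail W (cdf ρ s)) (Ioi 0) ∧
      PhiW W ρ = ∫ s in Ioi 0, weightTail W (cdf ρ s) := by
  have hW_meas : Measurable (clampedWeight W) := (antitone_clampedWeight hW_anti).measurable
  have htail : (fun t => ∫ r in Ioi t, clampedWeight W (cdf ρ r) ∂ρ) =
      fun s => weightTail W (cdf ρ s) := funext (setIntegral_Ioi_comp_cdf hW_meas)
  have hPhiW : PhiW W ρ = ∫ r, r * clampedWeight W (cdf ρ r) ∂ρ := by
    simp only [PhiW, clampedWeight_cdf]
  rw [hPhiW, ← htail]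
  exact integral_mul_eq_integral_setIntegral_Ioi hρ_nn hρ_int (hW_meas.comp measurable_cdf)
    (fun _ => clampedWeight_nonneg hW_nn _)
    (fun r => antitone_clampedWeight hW_anti (cdf_nonneg r))

variable {ρ : Measure ℝ} [IsProbabilityMeasure ρ]

lemma integrableOn_clampedWeight_cdf_mul_cdf (a b : ℝ) :
    IntegrableOn (fun s => clampedWeight W (cdf ρ s) * cdf ρ s) (Ioc a b) := by
  refine Measure.integrableOn_of_bounded (M := clampedWeight W 0) measure_Ioc_lt_top.ne
    ((((antitone_clampedWeight hW_anti).measurable.comp measurable_cdf).mul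
      measurable_cdf).aestronglyMeasurable) (.of_forall fun s => ?_)
  rw [Real.norm_of_nonneg (mul_nonneg (clampedWeight_nonneg hW_nn _) (cdf_nonneg s))]
  exact (mul_le_of_le_one_right (clampedWeight_nonneg hW_nn _) (cdf_le_one s)).trans
    (antitone_clampedWeight hW_anti (cdf_nonneg s))

/-- The quantile `F⁻¹(F(r*))` lies in `[0, r*]`. -/
lemma IFmax_le_setIntegral {rstar : ℝ} (hr : 0 ≤ rstar) :
    IFmax W ρ (cdf ρ rstar) ≤ ∫ s in Ioc 0 rstar, clampedWeight W (cdf ρ s) * cdf ρ s := by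
  have hmem : rstar ∈ {r | 0 ≤ r ∧ cdf ρ rstar ≤ cdf ρ r} := ⟨hr, le_rfl⟩
  have hq₀ : 0 ≤ quant ρ (cdf ρ rstar) := le_csInf ⟨rstar, hmem⟩ fun _ h => h.1
  have hq : quant ρ (cdf ρ rstar) ≤ rstar := csInf_le ⟨0, fun _ h => h.1⟩ hmem
  simp only [IFmax, intervalIntegral.integral_of_le hq₀, ← clampedWeight_cdf (W := W)]
  exact setIntegral_mono_set (integrableOn_clampedWeight_cdf_mul_cdf hW_anti hW_nn _ _)
    (.of_forall fun s => mul_nonneg (clampedWeight_nonneg hW_nn _) (cdf_nonneg s))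
    (Ioc_subset_Ioc_right hq).eventuallyLE


theorem mul_IFmax_le_PhiW_sub {ρ₀ : Measure ℝ} [IsProbabilityMeasure ρ₀] [NullSingletonClass ρ]
    [NullSingletonClass ρ₀] (hρ_nn : ∀ᵐ r ∂ρ, 0 ≤ r) (hρ_int : Integrable (fun r => r) ρ)
    (hρ₀_nn : ∀ᵐ r ∂ρ₀, 0 ≤ r) (hρ₀_int : Integrable (fun r => r) ρ₀) {c rstar : ℝ}
    (hc : c ≤ 1) (hr : 0 ≤ rstar) (hcdf : ∀ s ∈ Ioc 0 rstar, cdf ρ s ≤ c * cdf ρ₀ s)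
    (hW_zero : ∀ t, cdf ρ₀ rstar ≤ t → W t = 0) :
    (1 - c) * IFmax W ρ₀ (cdf ρ₀ rstar) ≤ PhiW W ρ - PhiW W ρ₀ := by
  obtain ⟨hint, hPhiW⟩ := PhiW_eq_integral_weightTail hW_anti hW_nn hρ_nn hρ_int
  obtain ⟨hint₀, hPhiW₀⟩ := PhiW_eq_integral_weightTail hW_anti hW_nn hρ₀_nn hρ₀_int
  set g := fun s => weightTail W (cdf ρ s) - weightTail W (cdf ρ₀ s)
  have hg : IntegrableOn g (Ioi 0) := hint.sub hint₀
  have hsplit : PhiW W ρ - PhiW W ρ₀ = (∫ s in Ioc 0 rstar, g s) + ∫ s in Ioi rstar, g s := by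
    rw [hPhiW, hPhiW₀, ← integral_sub hint hint₀, ← setIntegral_union
      (Ioc_disjoint_Ioi le_rfl) measurableSet_Ioi (hg.mono_set Ioc_subset_Ioi_self)
      (hg.mono_set (Ioi_subset_Ioi hr)), Ioc_union_Ioi_eq_Ioi hr]
  have htail : 0 ≤ ∫ s in Ioi rstar, g s := setIntegral_nonneg measurableSet_Ioi fun s hs => by
    have hzero := weightTail_eq_zero (cdf_nonneg s)
      fun t ht => hW_zero t ((monotone_cdf (le_of_lt hs)).trans ht)
    simpa only [g, hzero, sub_zero] using weightTail_nonneg hW_nn _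
  have hbody : (1 - c) * ∫ s in Ioc 0 rstar, clampedWeight W (cdf ρ₀ s) * cdf ρ₀ s ≤
      ∫ s in Ioc 0 rstar, g s := by
    rw [← integral_const_mul]
    refine setIntegral_mono_on
      ((integrableOn_clampedWeight_cdf_mul_cdf hW_anti hW_nn _ _).const_mul _)
      (hg.mono_set Ioc_subset_Ioi_self) measurableSet_Ioc fun s hs => ?_
    have hgap := sub_mul_clampedWeight_le_weightTail_sub hW_anti
      (mul_le_of_le_one_left (cdf_nonneg s) hc) (cdf_le_one (ρ := ρ₀) s)
    have hmono := antitone_weightTail hW_anti hW_nn (hcdf s hs)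
    simp only [g]
    linarith
  calc (1 - c) * IFmax W ρ₀ (cdf ρ₀ rstar)
      ≤ (1 - c) * ∫ s in Ioc 0 rstar, clampedWeight W (cdf ρ₀ s) * cdf ρ₀ s :=
        mul_le_mul_of_nonneg_left (IFmax_le_setIntegral hW_anti hW_nn hr) (sub_nonneg.2 hc)
    _ ≤ PhiW W ρ - PhiW W ρ₀ := by linarith

end RobustFunctional

lemma cdf_smul_add_smul {ρ₁ ρ₂ : Measure ℝ} [IsFiniteMeasure ρ₁] [IsFiniteMeasure ρ₂]
    {a b : ℝ} (ha : 0 ≤ a) (hb : 0 ≤ b) (r : ℝ) :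
    cdf (ENNReal.ofReal a • ρ₁ + ENNReal.ofReal b • ρ₂) r = a * cdf ρ₁ r + b * cdf ρ₂ r := by
  simp only [cdf, Measure.add_apply, Measure.smul_apply, smul_eq_mul]
  rw [ENNReal.toReal_add (by finiteness) (by finiteness), ENNReal.toReal_mul,
    ENNReal.toReal_mul, ENNReal.toReal_ofReal ha, ENNReal.toReal_ofReal hb]

lemma isProbabilityMeasure_mixture {α : Type*} [MeasurableSpace α] {μ₁ μ₂ : Measure α}
    [IsProbabilityMeasure μ₁] [IsProbabilityMeasure μ₂] {lam : ℝ} (hlam : lam ∈ Icc (0 : ℝ) 1) :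
    IsProbabilityMeasure (ENNReal.ofReal (1 - lam) • μ₁ + ENNReal.ofReal lam • μ₂) := by
  constructor
  simp only [Measure.add_apply, Measure.smul_apply, smul_eq_mul, measure_univ, mul_one]
  rw [← ENNReal.ofReal_add (sub_nonneg.2 hlam.2) hlam.1, sub_add_cancel, ENNReal.ofReal_one]

section Distortion

variable {d : ℕ} (S : Set (EuclideanSpace ℝ (Fin d)))

lemma measurable_distS : Measurable (distS S) :=
  ((Metric.continuous_infDist_pt S).pow 2).measurable

lemma ae_nonneg_pushS (μ : Measure (EuclideanSpace ℝ (Fin d))) : ∀ᵐ r ∂pushS μ S, 0 ≤ r :=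
  (ae_map_iff (measurable_distS S).aemeasurable measurableSet_Ici).2
    (.of_forall fun _ => sq_nonneg _)

instance (μ : Measure (EuclideanSpace ℝ (Fin d))) [IsProbabilityMeasure μ] :
    IsProbabilityMeasure (pushS μ S) :=
  Measure.isProbabilityMeasure_map (measurable_distS S).aemeasurable

lemma pushS_smul_add (a b : ENNReal) (μ₁ μ₂ : Measure (EuclideanSpace ℝ (Fin d))) :
    pushS (a • μ₁ + b • μ₂) S = a • pushS μ₁ S + b • pushS μ₂ S := by
  rw [pushS, Measure.map_add _ _ (measurable_distS S), Measure.map_smul, Measure.map_smul]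
  rfl

end Distortion

theorem robust_resilience_to_perturbations_general {d : ℕ}
    (μStar ν : Measure (EuclideanSpace ℝ (Fin d)))
    [IsProbabilityMeasure μStar] [IsProbabilityMeasure ν]
    (lam : ℝ) (hlam : lam ∈ Ioo (0 : ℝ) 1)
    (μ : Measure (EuclideanSpace ℝ (Fin d)))
    (hμ : μ = ENNReal.ofReal (1 - lam) • μStar + ENNReal.ofReal lam • ν)
    (𝒮 : Set (Set (EuclideanSpace ℝ (Fin d))))
    (hna : ∀ S ∈ 𝒮, (∀ r : ℝ, pushS μ S {r} = 0) ∧ (∀ r : ℝ, pushS μStar S {r} = 0))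
    (hint : ∀ S ∈ 𝒮, Integrable (fun r : ℝ => r) (pushS μ S) ∧
      Integrable (fun r : ℝ => r) (pushS μStar S))
    -- Assumption A
    (S₀ : Set (EuclideanSpace ℝ (Fin d))) (hS₀ : S₀ ∈ 𝒮)
    (δ : ℝ) (β : ℝ) (hβ : β ∈ Ioo (0 : ℝ) (1 - lam))
    (rstar : ℝ) (hrstar : 0 < rstar)
    (hA : ∀ S ∈ 𝒮, Phi (pushS μStar S) > Phi (pushS μStar S₀) + δ →
      ∀ r ≤ rstar, cdf (pushS μ S) r < β * cdf (pushS μStar S₀) r)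
    -- the weight function
    (W : ℝ → ℝ) (hWanti : AntitoneOn W (Icc 0 1)) (hWnn : ∀ t ∈ Icc (0 : ℝ) 1, 0 ≤ W t)
    (hWzero : ∀ t, cdf (pushS μ S₀) rstar ≤ t → W t = 0) :
    (∀ S ∈ 𝒮,
      PhiW W (pushS μ S) - PhiW W (pushS μ S₀) <
          (1 - β / (1 - lam)) * IFmax W (pushS μ S₀) (cdf (pushS μ S₀) rstar) →
        Phi (pushS μStar S) ≤ Phi (pushS μStar S₀) + δ) ∧
    (0 < IFmax W (pushS μ S₀) (cdf (pushS μ S₀) rstar) →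
      ∀ Sdag ∈ 𝒮, (∀ S ∈ 𝒮, PhiW W (pushS μ Sdag) ≤ PhiW W (pushS μ S)) →
        Phi (pushS μStar Sdag) ≤ Phi (pushS μStar S₀) + δ) := by
  have h1lam : 0 < 1 - lam := sub_pos.2 hlam.2
  have : IsProbabilityMeasure μ := hμ ▸ isProbabilityMeasure_mixture (Ioo_subset_Icc_self hlam)
  have : NullSingletonClass (pushS μ S₀) := ⟨(hna S₀ hS₀).1⟩
  have hc : β / (1 - lam) < 1 := (div_lt_one h1lam).2 hβ.2
  have hbad : ∀ S ∈ 𝒮, Phi (pushS μStar S) > Phi (pushS μStar S₀) + δ →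
      (1 - β / (1 - lam)) * IFmax W (pushS μ S₀) (cdf (pushS μ S₀) rstar) ≤
        PhiW W (pushS μ S) - PhiW W (pushS μ S₀) := by
    intro S hS hgt
    have : NullSingletonClass (pushS μ S) := ⟨(hna S hS).1⟩
    refine mul_IFmax_le_PhiW_sub hWanti hWnn (ae_nonneg_pushS S μ) (hint S hS).1
      (ae_nonneg_pushS S₀ μ) (hint S₀ hS₀).1 hc.le hrstar.le (fun s hs => ?_) hWzero
    have hmix : (1 - lam) * cdf (pushS μStar S₀) s ≤ cdf (pushS μ S₀) s := by
      rw [hμ, pushS_smul_add, cdf_smul_add_smul h1lam.le hlam.1.le]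
      exact le_add_of_nonneg_right (mul_nonneg hlam.1.le (cdf_nonneg s))
    rw [div_mul_eq_mul_div, le_div_iff₀ h1lam]
    nlinarith [hA S hS hgt s hs.2, hβ.1]
  refine ⟨fun S hS hlt => not_lt.1 fun hgt => (hbad S hS hgt).not_gt hlt,
    fun hIF Sdag hSdag hmin => not_lt.1 fun hgt => ?_⟩
  have hpos := mul_pos (sub_pos.2 hc) hIF
  linarith [hbad Sdag hSdag hgt, hmin S₀ hS₀]

/-- Theorem 1: under Assumption A, any model `S` whose robust objective value is within
`(1 - β/(1-λ)) IF_max(μ_{S₀}, W)` of that of `S₀` has reconstruction error on the unperturbed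
distribution at most `Φ(μ*_{S₀}) + δ`; in particular (if `IF_max(μ_{S₀},W) > 0`) this holds
for any minimizer `S†` of `S ↦ Φ_W(μ_S)` over `𝒮`. -/
theorem robust_resilience_to_perturbations {d : ℕ}
    (μStar ν : Measure (EuclideanSpace ℝ (Fin d)))
    [IsProbabilityMeasure μStar] [IsProbabilityMeasure ν]
    (lam : ℝ) (hlam : lam ∈ Ioo (0 : ℝ) 1)
    (μ : Measure (EuclideanSpace ℝ (Fin d)))
    (hμ : μ = ENNReal.ofReal (1 - lam) • μStar + ENNReal.ofReal lam • ν)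
    (𝒮 : Set (Set (EuclideanSpace ℝ (Fin d))))
    (hScomp : ∀ S ∈ 𝒮, IsCompact S ∧ S.Nonempty)
    (hna : ∀ S ∈ 𝒮, (∀ r : ℝ, pushS μ S {r} = 0) ∧ (∀ r : ℝ, pushS μStar S {r} = 0))
    (hint : ∀ S ∈ 𝒮, Integrable (fun r : ℝ => r) (pushS μ S) ∧
      Integrable (fun r : ℝ => r) (pushS μStar S))
    -- Assumption A
    (S₀ : Set (EuclideanSpace ℝ (Fin d))) (hS₀ : S₀ ∈ 𝒮)
    (δ : ℝ) (hδ : 0 < δ) (β : ℝ) (hβ : β ∈ Ioo (0 : ℝ) (1 - lam))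
    (rstar : ℝ) (hrstar : 0 < rstar)
    (hA : ∀ S ∈ 𝒮, Phi (pushS μStar S) > Phi (pushS μStar S₀) + δ →
      ∀ r ≤ rstar, cdf (pushS μ S) r < β * cdf (pushS μStar S₀) r)
    -- the weight function
    (W : ℝ → ℝ) (hWanti : AntitoneOn W (Icc 0 1)) (hWnn : ∀ t ∈ Icc (0 : ℝ) 1, 0 ≤ W t)
    (hWzero : ∀ t, cdf (pushS μ S₀) rstar ≤ t → W t = 0) :
    (∀ S ∈ 𝒮,
      PhiW W (pushS μ S) - PhiW W (pushS μ S₀) <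
          (1 - β / (1 - lam)) * IFmax W (pushS μ S₀) (cdf (pushS μ S₀) rstar) →
        Phi (pushS μStar S) ≤ Phi (pushS μStar S₀) + δ) ∧
    (0 < IFmax W (pushS μ S₀) (cdf (pushS μ S₀) rstar) →
      ∀ Sdag ∈ 𝒮, (∀ S ∈ 𝒮, PhiW W (pushS μ Sdag) ≤ PhiW W (pushS μ S)) →
        Phi (pushS μStar Sdag) ≤ Phi (pushS μStar S₀) + δ) :=
  robust_resilience_to_perturbations_general μStar ν lam hlam μ hμ 𝒮 hna hint S₀ hS₀ δ β hβ rstar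
    hrstar hA W hWanti hWnn hWzero
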